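/- Quotient-map simulation for positive Reg-GXPath: let G and H be data-graphs and f : V_G → V_H a surjective map such that D_H(f(v)) = D_G(v) for all v, and such that for every edge label a, a ∈ L_G(v,w) implies a ∈ L_H(f(v), f(w)). Suppose additionally that H's edge labeling is exactly the image: a ∈ L_H(x,y) iff there exist v, w with f(v) = x, f(w) = y, a ∈ L_G(v,w). Then for every positive Reg-GXPath path expression α, (v,w) ∈ ⟦α⟧_G implies (f(v), f(w)) ∈ ⟦α⟧_H, and for every positive node expression φ, v ∈ ⟦φ⟧_G implies f(v) ∈ ⟦φ⟧_H. -/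

import Mathlib

/-- A data-graph: a set of nodes, an edge labeling, and a data-value assignment. -/
structure DataGraph (V E Dv : Type) where
  nodes : Set V
  edges : V → V → Set E
  data : V → Dv

mutual
/-- Reg-GXPath path expressions. -/
inductive PExp (E Dv : Type) where
  | eps : PExp E Dv
  | wild : PExp E Dv
  | lab : E → PExp E Dv
  | inv : E → PExp E Dv
  | test : NExp E Dv → PExp E Dv
  | comp : PExp E Dv → PExp E Dv → PExp E Dv
  | union : PExp E Dv → PExp E Dv → PExp E Dv
  | inter : PExp E Dv → PExp E Dv → PExp E Dv
  | star : PExp E Dv → PExp E Dv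
  | compl : PExp E Dv → PExp E Dv
  | iter : PExp E Dv → ℕ → ℕ → PExp E Dv
/-- Reg-GXPath node expressions. -/
inductive NExp (E Dv : Type) where
  | neg : NExp E Dv → NExp E Dv
  | and : NExp E Dv → NExp E Dv → NExp E Dv
  | or : NExp E Dv → NExp E Dv → NExp E Dv
  | diam : PExp E Dv → NExp E Dv
  | eqc : Dv → NExp E Dv
  | neqc : Dv → NExp E Dv
  | cmpEq : PExp E Dv → PExp E Dv → NExp E Dv
  | cmpNeq : PExp E Dv → PExp E Dv → NExp E Dv
end

variable {V E Dv : Type}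

/-- Relational composition of binary relations presented as sets of pairs. -/
def dgComp (R S : Set (V × V)) : Set (V × V) := {p | ∃ y, (p.1, y) ∈ R ∧ (y, p.2) ∈ S}

/-- The identity relation on the nodes of a data-graph. -/
def DataGraph.idRel (G : DataGraph V E Dv) : Set (V × V) := {p | p.1 = p.2 ∧ p.1 ∈ G.nodes}

/-- Iterated relational composition, with `I` as the 0-th power (identity). -/
def dgPow (I R : Set (V × V)) : ℕ → Set (V × V)
  | 0 => I
  | k + 1 => dgComp (dgPow I R k) R

mutual
/-- Semantics of path expressions on a data-graph: a set of pairs of nodes. -/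
def psem (G : DataGraph V E Dv) : PExp E Dv → Set (V × V)
  | .eps => G.idRel
  | .wild => {p | p.1 ∈ G.nodes ∧ p.2 ∈ G.nodes ∧ (G.edges p.1 p.2).Nonempty}
  | .lab a => {p | p.1 ∈ G.nodes ∧ p.2 ∈ G.nodes ∧ a ∈ G.edges p.1 p.2}
  | .inv a => {p | p.1 ∈ G.nodes ∧ p.2 ∈ G.nodes ∧ a ∈ G.edges p.2 p.1}
  | .test φ => {p | p.1 = p.2 ∧ p.1 ∈ nsem G φ}
  | .comp α β => dgComp (psem G α) (psem G β)
  | .union α β => psem G α ∪ psem G β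
  | .inter α β => psem G α ∩ psem G β
  | .star α => G.idRel ∪ {p | Relation.TransGen (fun x y => (x, y) ∈ psem G α) p.1 p.2}
  | .compl α => {p | p.1 ∈ G.nodes ∧ p.2 ∈ G.nodes ∧ p ∉ psem G α}
  | .iter α n m => {p | ∃ k, n ≤ k ∧ k ≤ m ∧ p ∈ dgPow G.idRel (psem G α) k}
/-- Semantics of node expressions on a data-graph: a set of nodes. -/
def nsem (G : DataGraph V E Dv) : NExp E Dv → Set V
  | .neg φ => {v | v ∈ G.nodes ∧ v ∉ nsem G φ}
  | .and φ ψ => nsem G φ ∩ nsem G ψ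
  | .or φ ψ => nsem G φ ∪ nsem G ψ
  | .diam α => {v | ∃ w, (v, w) ∈ psem G α}
  | .eqc c => {v | v ∈ G.nodes ∧ G.data v = c}
  | .neqc c => {v | v ∈ G.nodes ∧ G.data v ≠ c}
  | .cmpEq α β => {v | ∃ v' v'', (v, v') ∈ psem G α ∧ (v, v'') ∈ psem G β ∧ G.data v' = G.data v''}
  | .cmpNeq α β => {v | ∃ v' v'', (v, v') ∈ psem G α ∧ (v, v'') ∈ psem G β ∧ G.data v' ≠ G.data v''}
end

mutual
/-- Positive (complement/negation-free) path expressions. -/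
def PExp.Positive : PExp E Dv → Prop
  | .eps => True
  | .wild => True
  | .lab _ => True
  | .inv _ => True
  | .test φ => φ.Positive
  | .comp α β => α.Positive ∧ β.Positive
  | .union α β => α.Positive ∧ β.Positive
  | .inter α β => α.Positive ∧ β.Positive
  | .star α => α.Positive
  | .compl _ => False
  | .iter α _ _ => α.Positive
/-- Positive (negation-free) node expressions. -/
def NExp.Positive : NExp E Dv → Prop
  | .neg _ => False
  | .and φ ψ => φ.Positive ∧ ψ.Positive
  | .or φ ψ => φ.Positive ∧ ψ.Positive
  | .diam α => α.Positive
  | .eqc _ => True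
  | .neqc _ => True
  | .cmpEq α β => α.Positive ∧ β.Positive
  | .cmpNeq α β => α.Positive ∧ β.Positive
end

/-- `G.Subgraph G'` : `G` is a sub-data-graph of `G'`. -/
def DataGraph.Subgraph (G G' : DataGraph V E Dv) : Prop :=
  G.nodes ⊆ G'.nodes ∧ (∀ v ∈ G.nodes, ∀ w ∈ G.nodes, G.edges v w ⊆ G'.edges v w) ∧
    ∀ v ∈ G.nodes, G.data v = G'.data v

/-- Consistency of a data-graph w.r.t. sets of path and node constraints. -/
def DataGraph.Consistent (G : DataGraph V E Dv)
    (Rp : Set (PExp E Dv)) (Rn : Set (NExp E Dv)) : Prop :=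
  (∀ α ∈ Rp, ∀ v ∈ G.nodes, ∀ w ∈ G.nodes, (v, w) ∈ psem G α) ∧
    (∀ φ ∈ Rn, ∀ v ∈ G.nodes, v ∈ nsem G φ)

/-- `H` is a subset repair of `G` w.r.t. constraints `Rp ∪ Rn`. -/
def IsSubsetRepair (H G : DataGraph V E Dv)
    (Rp : Set (PExp E Dv)) (Rn : Set (NExp E Dv)) : Prop :=
  H.Consistent Rp Rn ∧ H.Subgraph G ∧
    ∀ K : DataGraph V E Dv, K.Consistent Rp Rn → K.Subgraph G → H.Subgraph K → K.Subgraph H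

/-- `H` is a superset repair of `G` w.r.t. constraints `Rp ∪ Rn`. -/
def IsSupersetRepair (H G : DataGraph V E Dv)
    (Rp : Set (PExp E Dv)) (Rn : Set (NExp E Dv)) : Prop :=
  H.Consistent Rp Rn ∧ G.Subgraph H ∧
    ∀ K : DataGraph V E Dv, K.Consistent Rp Rn → G.Subgraph K → K.Subgraph H → H.Subgraph K
mutual

theorem psem_mem_left {V E Dv : Type} (G : DataGraph V E Dv) :
    ∀ α : PExp E Dv, ∀ v w : V, (v, w) ∈ psem G α → v ∈ G.nodes
  | .eps, v, w, h => h.2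
  | .wild, v, w, h => h.1
  | .lab a, v, w, h => h.1
  | .inv a, v, w, h => h.1
  | .test φ, v, w, h => nsem_mem G φ v h.2
  | .comp α β, v, w, ⟨z, h1, _⟩ => psem_mem_left G α v z h1
  | .union α β, v, w, h =>
      h.elim (psem_mem_left G α v w) (psem_mem_left G β v w)
  | .inter α β, v, w, h => psem_mem_left G α v w h.1
  | .star α, v, w, h => by
      rcases h with h | h
      · exact h.2
      · change Relation.TransGen _ v w at h
        induction h with
        | single h => exact psem_mem_left G α _ _ h
        | tail _ _ ih => exact ih
  | .compl α, v, w, h => h.1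
  | .iter α n m, v, w, ⟨k, hn, hm, h⟩ => by
      clear hn hm
      induction k generalizing w with
      | zero => exact h.2
      | succ k ih => obtain ⟨z, h1, _⟩ := h; exact ih z h1

theorem psem_mem_right {V E Dv : Type} (G : DataGraph V E Dv) :
    ∀ α : PExp E Dv, ∀ v w : V, (v, w) ∈ psem G α → w ∈ G.nodes
  | .eps, v, w, h => (show v = w from h.1) ▸ (show v ∈ G.nodes from h.2)
  | .wild, v, w, h => h.2.1
  | .lab a, v, w, h => h.2.1
  | .inv a, v, w, h => h.2.1
  | .test φ, v, w, h => (show v = w from h.1) ▸ nsem_mem G φ v h.2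
  | .comp α β, v, w, ⟨z, _, h2⟩ => psem_mem_right G β z w h2
  | .union α β, v, w, h =>
      h.elim (psem_mem_right G α v w) (psem_mem_right G β v w)
  | .inter α β, v, w, h => psem_mem_right G α v w h.1
  | .star α, v, w, h => by
      rcases h with h | h
      · exact (show v = w from h.1) ▸ (show v ∈ G.nodes from h.2)
      · change Relation.TransGen _ v w at h
        induction h with
        | single h => exact psem_mem_right G α _ _ h
        | tail _ h => exact psem_mem_right G α _ _ h
  | .compl α, v, w, h => h.2.1
  | .iter α n m, v, w, ⟨k, _, _, h⟩ => by
      cases k with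
      | zero => exact (show v = w from h.1) ▸ (show v ∈ G.nodes from h.2)
      | succ k => obtain ⟨z, _, h2⟩ := h; exact psem_mem_right G α z w h2

theorem nsem_mem {V E Dv : Type} (G : DataGraph V E Dv) :
    ∀ φ : NExp E Dv, ∀ v : V, v ∈ nsem G φ → v ∈ G.nodes
  | .neg φ, v, h => h.1
  | .and φ ψ, v, h => nsem_mem G φ v h.1
  | .or φ ψ, v, h => h.elim (nsem_mem G φ v) (nsem_mem G ψ v)
  | .diam α, v, ⟨w, h⟩ => psem_mem_left G α v w h
  | .eqc c, v, h => h.1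
  | .neqc c, v, h => h.1
  | .cmpEq α β, v, ⟨v', v'', h1, _, _⟩ => psem_mem_left G α v v' h1
  | .cmpNeq α β, v, ⟨v', v'', h1, _, _⟩ => psem_mem_left G α v v' h1

end

mutual

theorem psim {V W E Dv : Type} (G : DataGraph V E Dv) (H : DataGraph W E Dv)
    (f : V → W)
    (hmap : ∀ v ∈ G.nodes, f v ∈ H.nodes)
    (hdata : ∀ v ∈ G.nodes, H.data (f v) = G.data v)
    (hfwd : ∀ v ∈ G.nodes, ∀ w ∈ G.nodes, ∀ a ∈ G.edges v w, a ∈ H.edges (f v) (f w)) :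
    ∀ α : PExp E Dv, α.Positive →
      ∀ v w : V, (v, w) ∈ psem G α → (f v, f w) ∈ psem H α
  | .eps, _, v, w, h => ⟨congrArg f h.1, hmap v h.2⟩
  | .wild, _, v, w, ⟨hv, hw, a, ha⟩ =>
      ⟨hmap v hv, hmap w hw, a, hfwd v hv w hw a ha⟩
  | .lab a, _, v, w, ⟨hv, hw, ha⟩ =>
      ⟨hmap v hv, hmap w hw, hfwd v hv w hw a ha⟩
  | .inv a, _, v, w, ⟨hv, hw, ha⟩ =>
      ⟨hmap v hv, hmap w hw, hfwd w hw v hv a ha⟩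
  | .test φ, hp, v, w, h =>
      ⟨congrArg f h.1, nsim G H f hmap hdata hfwd φ hp v h.2⟩
  | .comp α β, hp, v, w, ⟨z, h1, h2⟩ =>
      ⟨f z, psim G H f hmap hdata hfwd α hp.1 v z h1,
        psim G H f hmap hdata hfwd β hp.2 z w h2⟩
  | .union α β, hp, v, w, h =>
      h.elim (fun h => Or.inl (psim G H f hmap hdata hfwd α hp.1 v w h))
        (fun h => Or.inr (psim G H f hmap hdata hfwd β hp.2 v w h))
  | .inter α β, hp, v, w, h =>
      ⟨psim G H f hmap hdata hfwd α hp.1 v w h.1,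
        psim G H f hmap hdata hfwd β hp.2 v w h.2⟩
  | .star α, hp, v, w, h => by
      rcases h with h | h
      · exact Or.inl ⟨congrArg f h.1, hmap v h.2⟩
      · refine Or.inr ?_
        exact Relation.TransGen.lift (p := fun x y => (x, y) ∈ psem H α) f
          (fun x y hxy => psim G H f hmap hdata hfwd α hp x y hxy) _ _ h
  | .compl α, hp, v, w, h => False.elim hp
  | .iter α n m, hp, v, w, ⟨k, hn, hm, h⟩ => by
      refine ⟨k, hn, hm, ?_⟩
      clear hn hm
      induction k generalizing w with
      | zero => exact ⟨congrArg f h.1, hmap v h.2⟩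
      | succ k ih =>
          obtain ⟨z, h1, h2⟩ := h
          exact ⟨f z, ih z h1, psim G H f hmap hdata hfwd α hp z w h2⟩

theorem nsim {V W E Dv : Type} (G : DataGraph V E Dv) (H : DataGraph W E Dv)
    (f : V → W)
    (hmap : ∀ v ∈ G.nodes, f v ∈ H.nodes)
    (hdata : ∀ v ∈ G.nodes, H.data (f v) = G.data v)
    (hfwd : ∀ v ∈ G.nodes, ∀ w ∈ G.nodes, ∀ a ∈ G.edges v w, a ∈ H.edges (f v) (f w)) :
    ∀ φ : NExp E Dv, φ.Positive → ∀ v : V, v ∈ nsem G φ → f v ∈ nsem H φ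
  | .neg φ, hp, v, h => False.elim hp
  | .and φ ψ, hp, v, h =>
      ⟨nsim G H f hmap hdata hfwd φ hp.1 v h.1, nsim G H f hmap hdata hfwd ψ hp.2 v h.2⟩
  | .or φ ψ, hp, v, h =>
      h.elim (fun h => Or.inl (nsim G H f hmap hdata hfwd φ hp.1 v h))
        (fun h => Or.inr (nsim G H f hmap hdata hfwd ψ hp.2 v h))
  | .diam α, hp, v, ⟨w, h⟩ => ⟨f w, psim G H f hmap hdata hfwd α hp v w h⟩
  | .eqc c, _, v, h => ⟨hmap v h.1, (hdata v h.1).trans h.2⟩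
  | .neqc c, _, v, h => ⟨hmap v h.1, (hdata v h.1).symm ▸ h.2⟩
  | .cmpEq α β, hp, v, ⟨v', v'', h1, h2, h3⟩ => by
      have hv' : v' ∈ G.nodes := psem_mem_right G α v v' h1
      have hv'' : v'' ∈ G.nodes := psem_mem_right G β v v'' h2
      exact ⟨f v', f v'', psim G H f hmap hdata hfwd α hp.1 v v' h1,
        psim G H f hmap hdata hfwd β hp.2 v v'' h2,
        (hdata v' hv').trans (h3.trans (hdata v'' hv'').symm)⟩
  | .cmpNeq α β, hp, v, ⟨v', v'', h1, h2, h3⟩ => by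
      have hv' : v' ∈ G.nodes := psem_mem_right G α v v' h1
      have hv'' : v'' ∈ G.nodes := psem_mem_right G β v v'' h2
      refine ⟨f v', f v'', psim G H f hmap hdata hfwd α hp.1 v v' h1,
        psim G H f hmap hdata hfwd β hp.2 v v'' h2, ?_⟩
      rw [hdata v' hv', hdata v'' hv'']
      exact h3

end

/-- quotient-map simulation for positive Reg-GXPath. -/
theorem stmt10 {V W E Dv : Type} (G : DataGraph V E Dv) (H : DataGraph W E Dv)
    (f : V → W)
    (hmap : ∀ v ∈ G.nodes, f v ∈ H.nodes)
    (hsurj : ∀ x ∈ H.nodes, ∃ v ∈ G.nodes, f v = x)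
    (hdata : ∀ v ∈ G.nodes, H.data (f v) = G.data v)
    (hfwd : ∀ v ∈ G.nodes, ∀ w ∈ G.nodes, ∀ a ∈ G.edges v w, a ∈ H.edges (f v) (f w))
    (himg : ∀ x ∈ H.nodes, ∀ y ∈ H.nodes, ∀ a : E,
        a ∈ H.edges x y ↔ ∃ v ∈ G.nodes, ∃ w ∈ G.nodes, f v = x ∧ f w = y ∧ a ∈ G.edges v w) :
    (∀ α : PExp E Dv, α.Positive →
        ∀ v w : V, (v, w) ∈ psem G α → (f v, f w) ∈ psem H α) ∧
      (∀ φ : NExp E Dv, φ.Positive → ∀ v : V, v ∈ nsem G φ → f v ∈ nsem H φ) :=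
  ⟨psim G H f hmap hdata hfwd, nsim G H f hmap hdata hfwd⟩
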